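/- The SPH system with density as a function of positions, ρ_a(r) = Σ_b m_b w(|r_a - r_b|) + C_a, and velocity equation u̇_a = -Σ_b m_b (p_a/ρ_a² + p_b/ρ_b²) w'(r_{ab}) e_{ab} - g ẑ, is the canonical Hamiltonian system generated by H = Σ_a m_a(|u_a|²/2 + ε(ρ_a(r)) + g z_a), where ε satisfies ε'(ρ) = p(ρ)/ρ². -/

import Mathlib

open scoped RealInnerProductSpace

section Aux
variable {E : Type*} [NormedAddCommGroup E] [InnerProductSpace ℝ E]

lemma aux_hasFDerivAt_norm {x : E} (hx : x ≠ 0) :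
    HasFDerivAt (fun y : E => ‖y‖) (‖x‖⁻¹ • innerSL ℝ x) x := by
  have h1 : HasFDerivAt (fun y : E => ‖y‖ ^ 2) (2 • innerSL ℝ x) x :=
    (hasStrictFDerivAt_norm_sq x).hasFDerivAt
  have hx0 : ‖x‖ ≠ 0 := by simpa using hx
  have hx2 : (‖x‖ ^ 2 : ℝ) ≠ 0 := by positivity
  have h2 := (Real.hasDerivAt_sqrt hx2).comp_hasFDerivAt x h1
  have hfe : (Real.sqrt ∘ fun y : E => ‖y‖ ^ 2) = fun y : E => ‖y‖ := by
    funext y; simp [Function.comp, Real.sqrt_sq (norm_nonneg y)]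
  rw [hfe] at h2
  refine h2.congr_fderiv ?_
  rw [Real.sqrt_sq (norm_nonneg x)]
  ext y
  simp only [ContinuousLinearMap.smul_apply, smul_eq_mul, two_smul,
    ContinuousLinearMap.add_apply]
  field_simp
  ring

lemma aux_hasFDerivAt_w_norm {w : ℝ → ℝ} {x : E} (hw : DifferentiableAt ℝ w ‖x‖)
    (hx : x ≠ 0) :
    HasFDerivAt (fun y : E => w ‖y‖) ((deriv w ‖x‖ * ‖x‖⁻¹) • innerSL ℝ x) x := by
  have h := hw.hasDerivAt.comp_hasFDerivAt x (aux_hasFDerivAt_norm hx)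
  have hfe : (w ∘ fun y : E => ‖y‖) = fun y : E => w ‖y‖ := rfl
  rw [hfe] at h
  refine h.congr_fderiv ?_
  rw [smul_smul]

end Aux

abbrev SPHEsp (d : ℕ) := EuclideanSpace ℝ (Fin d)

/-- The SPH system with closed-form density `ρ_a(r) = ∑_b m_b w(|r_a - r_b|) + C_a` is the
canonical Hamiltonian system generated by
`H = ∑ a, m a (‖u a‖²/2 + ε(ρ_a(r)) + g ⟪r a, zhat⟫)` with `ε' (ρ) = p(ρ)/ρ²`:
the gradient of `H` in `r_a` is `m_a` times the negative of the stated SPH acceleration,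
and the gradient of `H` in `u_a` is the momentum `m_a u_a`. -/
theorem sph_is_canonical_hamiltonian
    (N d : ℕ) (m C : Fin N → ℝ) (hm : ∀ a, 0 < m a)
    (w : ℝ → ℝ) (hw : ContDiff ℝ (⊤ : ℕ∞) w) (hweven : ∀ x, w (-x) = w x)
    (p ε : ℝ → ℝ) (hε : ∀ ρ : ℝ, HasDerivAt ε (p ρ / ρ ^ 2) ρ)
    (g : ℝ) (zhat : EuclideanSpace ℝ (Fin d))
    (ρfun : (Fin N → EuclideanSpace ℝ (Fin d)) → Fin N → ℝ)
    (hρ : ∀ r' a, ρfun r' a = (∑ b, m b * w (‖r' a - r' b‖)) + C a)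
    (H : (Fin N → EuclideanSpace ℝ (Fin d)) → (Fin N → EuclideanSpace ℝ (Fin d)) → ℝ)
    (hH : ∀ r' u', H r' u' =
      ∑ a, m a * (‖u' a‖ ^ 2 / 2 + ε (ρfun r' a) + g * ⟪r' a, zhat⟫))
    (r u : Fin N → EuclideanSpace ℝ (Fin d))
    (hdist : ∀ a b, a ≠ b → r a ≠ r b) :
    (∀ (a : Fin N) (v : EuclideanSpace ℝ (Fin d)),
      fderiv ℝ (fun r' => H r' u) r (Pi.single a v) =
        ⟪m a • ((∑ b ∈ Finset.univ.erase a,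
            (m b * ((p (ρfun r a) / (ρfun r a) ^ 2 + p (ρfun r b) / (ρfun r b) ^ 2) *
              deriv w (‖r a - r b‖))) • (‖r a - r b‖⁻¹ • (r a - r b)))
          + g • zhat), v⟫) ∧
    (∀ (a : Fin N) (v : EuclideanSpace ℝ (Fin d)),
      fderiv ℝ (fun u' => H r u') u (Pi.single a v) = ⟪m a • u a, v⟫) := by
  classical
  set P : Fin N → ℝ := fun c => p (ρfun r c) / (ρfun r c) ^ 2 with hP
  set k : Fin N → Fin N → ℝ := fun c b => deriv w ‖r c - r b‖ * ‖r c - r b‖⁻¹ with hk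
  set T : Fin N → Fin N → ((Fin N → SPHEsp d) →L[ℝ] ℝ) := fun c b =>
    (m b * k c b) • ((innerSL ℝ (r c - r b)).comp
      (ContinuousLinearMap.proj (R := ℝ) (φ := fun _ : Fin N => SPHEsp d) c - ContinuousLinearMap.proj (R := ℝ) (φ := fun _ : Fin N => SPHEsp d) b)) with hTdef
  have hT0 : ∀ c, T c c = 0 := by
    intro c; ext y
    simp [hTdef]
  have hTd : ∀ c b, HasFDerivAt (fun r' : Fin N → SPHEsp d => m b * w ‖r' c - r' b‖) (T c b) r := by
    intro c b
    by_cases hbc : b = c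
    · subst hbc
      have : (fun r' : Fin N → SPHEsp d => m b * w ‖r' b - r' b‖) = fun _ => m b * w 0 := by
        funext r'; simp
      rw [this, hT0]
      exact hasFDerivAt_const _ _
    · have hne : r c - r b ≠ 0 := sub_ne_zero.2 (hdist c b (fun h => hbc h.symm))
      have hproj : HasFDerivAt (fun r' : Fin N → SPHEsp d => r' c - r' b)
          ((ContinuousLinearMap.proj c - ContinuousLinearMap.proj b :
            (Fin N → SPHEsp d) →L[ℝ] SPHEsp d)) r :=
        ((ContinuousLinearMap.proj (R := ℝ) (φ := fun _ : Fin N => SPHEsp d) c) -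
          (ContinuousLinearMap.proj b)).hasFDerivAt
      have hwd : DifferentiableAt ℝ w ‖r c - r b‖ := (hw.differentiable (by simp)).differentiableAt
      have h := ((aux_hasFDerivAt_w_norm hwd hne).comp r hproj).const_mul (m b)
      have hfe : (fun r' : Fin N → SPHEsp d =>
          m b * ((fun y : SPHEsp d => w ‖y‖) ∘ fun r' : Fin N → SPHEsp d => r' c - r' b) r') =
          fun r' : Fin N → SPHEsp d => m b * w ‖r' c - r' b‖ := rfl
      rw [hfe] at h
      refine h.congr_fderiv ?_
      ext y
      simp only [hTdef, hk, ContinuousLinearMap.smul_apply, ContinuousLinearMap.comp_apply,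
        ContinuousLinearMap.sub_apply, ContinuousLinearMap.proj_apply, innerSL_apply_apply,
        smul_eq_mul]
      ring
  have hρd : ∀ c, HasFDerivAt (fun r' : Fin N → SPHEsp d => ρfun r' c)
      (∑ b ∈ Finset.univ.erase c, T c b) r := by
    intro c
    have h1 : HasFDerivAt (fun r' : Fin N → SPHEsp d => (∑ b, m b * w ‖r' c - r' b‖) + C c)
        (∑ b, T c b) r :=
      (HasFDerivAt.fun_sum fun b _ => hTd c b).add_const _
    have hfe : (fun r' : Fin N → SPHEsp d => (∑ b, m b * w ‖r' c - r' b‖) + C c) =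
        fun r' => ρfun r' c := by funext r'; rw [hρ]
    rw [hfe] at h1
    rwa [← Finset.sum_erase _ (hT0 c)] at h1
  -- derivative of each H-summand in r
  set G : Fin N → ((Fin N → SPHEsp d) →L[ℝ] ℝ) := fun c =>
    (innerSL ℝ zhat).comp ((ContinuousLinearMap.proj (R := ℝ) (φ := fun _ : Fin N => SPHEsp d) c)) with hGdef
  set D : (Fin N → SPHEsp d) →L[ℝ] ℝ := ∑ c, m c • (((0 : (Fin N → SPHEsp d) →L[ℝ] ℝ) +
    P c • ∑ b ∈ Finset.univ.erase c, T c b) + g • G c) with hDdef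
  have hHd : HasFDerivAt (fun r' : Fin N → SPHEsp d => H r' u) D r := by
    have hterm : ∀ c : Fin N, HasFDerivAt
        (fun r' : Fin N → SPHEsp d => m c * (‖u c‖ ^ 2 / 2 + ε (ρfun r' c) + g * ⟪r' c, zhat⟫))
        (m c • (((0 : (Fin N → SPHEsp d) →L[ℝ] ℝ) +
          P c • ∑ b ∈ Finset.univ.erase c, T c b) + g • G c)) r := by
      intro c
      have hε' : HasFDerivAt (fun r' : Fin N → SPHEsp d => ε (ρfun r' c))
          (P c • ∑ b ∈ Finset.univ.erase c, T c b) r := by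
        have := (hε (ρfun r c)).comp_hasFDerivAt r (hρd c)
        exact this
      have hg' : HasFDerivAt (fun r' : Fin N → SPHEsp d => g * ⟪r' c, zhat⟫) (g • G c) r := by
        have h1 : HasFDerivAt (fun r' : Fin N → SPHEsp d => ⟪zhat, r' c⟫) (G c) r :=
          ((innerSL ℝ zhat).comp ((ContinuousLinearMap.proj (R := ℝ) (φ := fun _ : Fin N => SPHEsp d) c))).hasFDerivAt
        have h2 := h1.const_mul g
        have : (fun r' : Fin N → SPHEsp d => g * ⟪zhat, r' c⟫) =
            fun r' : Fin N → SPHEsp d => g * ⟪r' c, zhat⟫ := by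
          funext r'; rw [real_inner_comm]
        rwa [this] at h2
      exact (((hasFDerivAt_const (‖u c‖ ^ 2 / 2) r).add hε').add hg').const_mul (m c)
    have h := HasFDerivAt.fun_sum (fun c (_ : c ∈ Finset.univ) => hterm c)
    have hfe : (fun r' : Fin N → SPHEsp d =>
        ∑ c, m c * (‖u c‖ ^ 2 / 2 + ε (ρfun r' c) + g * ⟪r' c, zhat⟫)) =
        fun r' => H r' u := by funext r'; rw [hH]
    rwa [hfe] at h
  constructor
  · intro a v
    rw [hHd.fderiv]
    -- evaluate D at (Pi.single a v : Fin N → SPHEsp d)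
    have hval : D ((Pi.single a v : Fin N → SPHEsp d)) =
        ∑ c, m c * (P c * ∑ b ∈ Finset.univ.erase c,
          (m b * k c b) * ⟪r c - r b, (Pi.single a v : Fin N → SPHEsp d) c - (Pi.single a v : Fin N → SPHEsp d) b⟫
          + g * ⟪zhat, (Pi.single a v : Fin N → SPHEsp d) c⟫) := by
      simp only [hDdef, hTdef, hGdef, ContinuousLinearMap.sum_apply,
        ContinuousLinearMap.smul_apply, ContinuousLinearMap.add_apply,
        ContinuousLinearMap.zero_apply, ContinuousLinearMap.comp_apply,
        ContinuousLinearMap.sub_apply, ContinuousLinearMap.proj_apply, innerSL_apply_apply,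
        smul_eq_mul, zero_add]
    rw [hval]
    rw [← Finset.add_sum_erase _ _ (Finset.mem_univ a)]
    have hA : m a * (P a * ∑ b ∈ Finset.univ.erase a,
        (m b * k a b) * ⟪r a - r b, (Pi.single a v : Fin N → SPHEsp d) a - (Pi.single a v : Fin N → SPHEsp d) b⟫
        + g * ⟪zhat, (Pi.single a v : Fin N → SPHEsp d) a⟫) =
        m a * (P a * ∑ b ∈ Finset.univ.erase a,
          (m b * k a b) * ⟪r a - r b, v⟫ + g * ⟪zhat, v⟫) := by
      congr 2
      · congr 1
        refine Finset.sum_congr rfl fun b hb => ?_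
        have hba : b ≠ a := Finset.ne_of_mem_erase hb
        rw [Pi.single_eq_same, Pi.single_eq_of_ne hba, sub_zero]
      · rw [Pi.single_eq_same]
    have hB : ∀ c ∈ Finset.univ.erase a,
        m c * (P c * ∑ b ∈ Finset.univ.erase c,
          (m b * k c b) * ⟪r c - r b, (Pi.single a v : Fin N → SPHEsp d) c - (Pi.single a v : Fin N → SPHEsp d) b⟫
          + g * ⟪zhat, (Pi.single a v : Fin N → SPHEsp d) c⟫) =
        m c * (P c * ((m a * k a c) * ⟪r a - r c, v⟫)) := by
      intro c hc
      have hca : c ≠ a := Finset.ne_of_mem_erase hc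
      have hac : a ∈ Finset.univ.erase c :=
        Finset.mem_erase.2 ⟨fun h => hca h.symm, Finset.mem_univ a⟩
      have hsum : (∑ b ∈ Finset.univ.erase c, (m b * k c b) *
          ⟪r c - r b, (Pi.single a v : Fin N → SPHEsp d) c -
            (Pi.single a v : Fin N → SPHEsp d) b⟫) =
          (m a * k c a) * ⟪r c - r a, (Pi.single a v : Fin N → SPHEsp d) c -
            (Pi.single a v : Fin N → SPHEsp d) a⟫ := by
        refine Finset.sum_eq_single_of_mem a hac ?_
        intro b hb hba
        rw [Pi.single_eq_of_ne hca, Pi.single_eq_of_ne hba, sub_zero, inner_zero_right,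
          mul_zero]
      rw [hsum, Pi.single_eq_of_ne hca, Pi.single_eq_same, inner_zero_right, mul_zero,
        add_zero, zero_sub, inner_neg_right]
      have h1 : ⟪r c - r a, v⟫ = -⟪r a - r c, v⟫ := by rw [← inner_neg_left, neg_sub]
      have h2 : k c a = k a c := by simp only [hk]; rw [norm_sub_rev]
      rw [h1, h2]
      ring
    rw [Finset.sum_congr rfl hB, hA]
    -- now pure algebra
    have hRHS : ⟪m a • ((∑ b ∈ Finset.univ.erase a,
        (m b * ((P a + P b) * deriv w (‖r a - r b‖))) • (‖r a - r b‖⁻¹ • (r a - r b)))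
        + g • zhat), v⟫ =
        m a * ((∑ b ∈ Finset.univ.erase a,
          (m b * ((P a + P b) * deriv w (‖r a - r b‖))) * (‖r a - r b‖⁻¹ * ⟪r a - r b, v⟫))
          + g * ⟪zhat, v⟫) := by
      rw [real_inner_smul_left, inner_add_left, sum_inner]
      simp only [real_inner_smul_left]
    rw [hRHS, mul_add, mul_add, add_right_comm]
    congr 1
    simp only [Finset.mul_sum]
    rw [← Finset.sum_add_distrib]
    refine Finset.sum_congr rfl fun b hb => ?_
    simp only [hk, hP]
    ring
  · intro a v
    have hterm : ∀ c : Fin N, HasFDerivAt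
        (fun u' : Fin N → SPHEsp d => m c * (‖u' c‖ ^ 2 / 2 + ε (ρfun r c) + g * ⟪r c, zhat⟫))
        (m c • ((2 : ℝ)⁻¹ • (2 • ((innerSL ℝ (u c)).comp
          (ContinuousLinearMap.proj (R := ℝ) (φ := fun _ : Fin N => SPHEsp d) c))))) u := by
      intro c
      have h1 : HasFDerivAt (fun u' : Fin N → SPHEsp d => ‖u' c‖ ^ 2)
          (2 • ((innerSL ℝ (u c)).comp ((ContinuousLinearMap.proj (R := ℝ) (φ := fun _ : Fin N => SPHEsp d) c)))) u := by
        have := (ContinuousLinearMap.proj (R := ℝ) (φ := fun _ : Fin N => SPHEsp d) c).hasFDerivAt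
          (x := u) |>.norm_sq
        exact this
      have h2 := (h1.const_mul (2 : ℝ)⁻¹)
      have h3 : (fun u' : Fin N → SPHEsp d => (2:ℝ)⁻¹ * ‖u' c‖ ^ 2) =
          fun u' : Fin N → SPHEsp d => ‖u' c‖ ^ 2 / 2 := by funext u'; ring
      rw [h3] at h2
      exact ((h2.add_const (ε (ρfun r c))).add_const (g * ⟪r c, zhat⟫)).const_mul (m c)
    have h := HasFDerivAt.fun_sum (fun c (_ : c ∈ Finset.univ) => hterm c)
    have hfe : (fun u' : Fin N → SPHEsp d =>
        ∑ c, m c * (‖u' c‖ ^ 2 / 2 + ε (ρfun r c) + g * ⟪r c, zhat⟫)) =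
        fun u' => H r u' := by funext u'; rw [hH]
    rw [hfe] at h
    rw [h.fderiv]
    rw [real_inner_smul_left]
    simp only [ContinuousLinearMap.sum_apply, ContinuousLinearMap.smul_apply,
      ContinuousLinearMap.comp_apply, ContinuousLinearMap.proj_apply, innerSL_apply_apply,
      smul_eq_mul]
    rw [Finset.sum_eq_single_of_mem a (Finset.mem_univ a)]
    · simp only [Pi.single_eq_same, two_smul]; ring
    · intro c _ hca
      simp [Pi.single_eq_of_ne hca]
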